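/- arXiv:2405.02269 — 9 statements merged into one kernel-verified Lean document; each statement's English description precedes it below -/
import Mathlib

section
/- Let k ≥ 2, let z ∈ ℕ^k (where ℕ = {1,2,3,...}), and let R = z + ℕ^k = {z + w : w ∈ ℕ^k}. Suppose A ⊆ ℕ^k is complete with respect to R, i.e. R ⊆ FS(A). Then for every i ∈ {1,...,k} the projection A_i ⊆ ℕ of A onto the i-th coordinate is thick; that is, there exist ε > 0 and N₀ ∈ ℕ such that the counting function A_i(n) := #{a ∈ A_i : a ≤ n} satisfies A_i(n) ≥ n^ε for all n ≥ N₀. -/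
open scoped BigOperators

/-- `FS X` is the set of all sums of finitely many distinct elements of `X`
(sums over finite nonempty subsets of `X`). -/
def FS {α : Type*} [AddCommMonoid α] (X : Set α) : Set α :=
  {s | ∃ F : Finset α, F.Nonempty ∧ ↑F ⊆ X ∧ s = ∑ x ∈ F, x}

lemma sum_getD : ∀ (L : List ℕ) (C : ℕ), L.length ≤ C →
    ∑ t ∈ Finset.range C, L.getD t 0 = L.sum := by
  intro L
  induction L with
  | nil => intro C _; simp
  | cons a L ih =>
    intro C h
    match C with
    | C + 1 =>
      rw [Finset.sum_range_succ']
      simp only [List.getD_cons_succ, List.getD_cons_zero, List.sum_cons]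
      rw [ih C (by simpa using h)]
      ring

lemma key_lemma {k : ℕ} (i j : Fin k) (hij : j ≠ i) (z : Fin k → ℕ)
    (A : Set (Fin k → ℕ)) (hA : ∀ a ∈ A, ∀ t, 1 ≤ a t)
    (hcomp : {x : Fin k → ℕ | ∃ w : Fin k → ℕ, (∀ t, 1 ≤ w t) ∧ x = z + w} ⊆ FS A)
    (n n' : ℕ) (hn : z i + n' = n) :
    n' ≤ ({m : ℕ | (∃ a ∈ A, a i = m) ∧ m ≤ n}.ncard + 1) ^ (z j + 1) := by
  classical
  set C := z j + 1 with hC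
  set S := {m : ℕ | (∃ a ∈ A, a i = m) ∧ m ≤ n} with hS
  have hSfin : S.Finite := (Set.finite_Iic n).subset (fun x hx => hx.2)
  have h1 : ∀ m : ℕ, 1 ≤ m → m ≤ n' → ∃ F : Finset (Fin k → ℕ),
      F.Nonempty ∧ ↑F ⊆ A ∧ (z + fun t => if t = i then m else 1) = ∑ x ∈ F, x := by
    intro m hm1 _
    exact hcomp ⟨fun t => if t = i then m else 1,
      fun t => by dsimp only; split <;> omega, rfl⟩
  choose! F hF1 hF2 hF3 using h1
  have hmain : ∀ m ∈ Finset.Icc 1 n',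
      (fun t : Fin C => ((F m).val.map (fun a => a i)).toList.getD t 0) ∈
        Fintype.piFinset (fun _ : Fin C => insert 0 hSfin.toFinset) ∧
      ∑ t : Fin C, ((F m).val.map (fun a => a i)).toList.getD t 0 = z i + m := by
    intro m hm
    obtain ⟨hm1, hm2⟩ := Finset.mem_Icc.mp hm
    have hsub := hF2 m hm1 hm2
    have hsum : ∀ t, z t + (if t = i then m else 1) = ∑ a ∈ F m, a t := by
      intro t
      have h := congrFun (hF3 m hm1 hm2) t
      simpa [Finset.sum_apply] using h
    have hsumi : ∑ a ∈ F m, a i = z i + m := by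
      have h := hsum i
      rw [if_pos rfl] at h
      exact h.symm
    have hsumj : ∑ a ∈ F m, a j = C := by
      have h := hsum j
      rw [if_neg hij] at h
      exact h.symm
    have hcard : (F m).card ≤ C := by
      calc (F m).card = ∑ _a ∈ F m, 1 := Finset.card_eq_sum_ones _
        _ ≤ ∑ a ∈ F m, a j := Finset.sum_le_sum (fun a ha => hA a (hsub ha) j)
        _ = C := hsumj
    set L : List ℕ := ((F m).val.map (fun a => a i)).toList with hL
    have hlen : L.length ≤ C := by
      rw [hL, Multiset.length_toList, Multiset.card_map]
      exact hcard
    have haibound : ∀ a ∈ F m, a i ≤ n := by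
      intro a ha
      have h := Finset.single_le_sum (f := fun a => a i)
        (fun b _ => Nat.zero_le _) ha
      rw [hsumi] at h
      exact h.trans (by rw [← hn]; exact Nat.add_le_add_left hm2 _)
    constructor
    · rw [Fintype.mem_piFinset]
      intro t
      by_cases ht : (t : ℕ) < L.length
      · rw [List.getD_eq_getElem L 0 ht]
        have hmem : L[(t : ℕ)] ∈ L := List.getElem_mem ht
        have hmem' : L[(t : ℕ)] ∈ Multiset.map (fun a => a i) (F m).val := by
          rw [← Multiset.mem_toList]; exact hmem
        rw [Multiset.mem_map] at hmem'
        obtain ⟨a, haF, hai⟩ := hmem'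
        have haF' : a ∈ F m := Finset.mem_val.mp haF
        rw [Finset.mem_insert]
        right
        rw [Set.Finite.mem_toFinset]
        refine ⟨⟨a, hsub (Finset.mem_coe.mpr haF'), hai⟩, ?_⟩
        rw [← hai]
        exact haibound a haF'
      · rw [List.getD_eq_default L 0 (le_of_not_gt ht)]
        exact Finset.mem_insert_self 0 _
    · rw [Fin.sum_univ_eq_sum_range (fun t => L.getD t 0) C, sum_getD L C hlen,
        hL, Multiset.sum_toList]
      exact hsumi
  have hinj : Set.InjOn
      (fun m => (fun t : Fin C => ((F m).val.map (fun a => a i)).toList.getD t 0))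
      (Finset.Icc 1 n') := by
    intro m₁ h₁ m₂ h₂ he
    have e1 := (hmain m₁ h₁).2
    have e2 := (hmain m₂ h₂).2
    have e3 : z i + m₁ = z i + m₂ := by
      rw [← e1, ← e2]
      exact Finset.sum_congr rfl (fun t _ => congrFun he t)
    exact Nat.add_left_cancel e3
  have hcardle := Finset.card_le_card_of_injOn _ (fun m hm => (hmain m hm).1) hinj
  have hc1 : (Finset.Icc 1 n').card = n' := by simp
  have hc2 : (Fintype.piFinset (fun _ : Fin C => insert 0 hSfin.toFinset)).card
      = (insert 0 hSfin.toFinset).card ^ C := by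
    simp [Fintype.card_piFinset]
  have hc3 : (insert 0 hSfin.toFinset).card ≤ S.ncard + 1 := by
    calc (insert 0 hSfin.toFinset).card ≤ hSfin.toFinset.card + 1 :=
          Finset.card_insert_le _ _
      _ = S.ncard + 1 := by rw [Set.ncard_eq_toFinset_card S hSfin]
  calc n' = (Finset.Icc 1 n').card := hc1.symm
    _ ≤ (Fintype.piFinset (fun _ : Fin C => insert 0 hSfin.toFinset)).card := hcardle
    _ = (insert 0 hSfin.toFinset).card ^ C := hc2
    _ ≤ (S.ncard + 1) ^ C := Nat.pow_le_pow_left hc3 C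

lemma arith_lemma (C s n n' zi : ℕ) (hC2 : 2 ≤ C)
    (hn : 2 ^ C + 2 * zi + 1 ≤ n) (hnn' : zi + n' = n)
    (hkey : n' ≤ (s + 1) ^ C) : n ≤ s ^ (4 * C) := by
  have hp : 1 ≤ 2 ^ C := Nat.one_le_two_pow
  have hs2 : 2 ≤ s := by
    by_contra h'
    push_neg at h'
    have h2 : (s + 1) ^ C ≤ 2 ^ C := Nat.pow_le_pow_left (by omega) C
    omega
  have h3 : n' ≤ s ^ (2 * C) := by
    calc n' ≤ (s + 1) ^ C := hkey
      _ ≤ (s ^ 2) ^ C := Nat.pow_le_pow_left (by nlinarith) C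
      _ = s ^ (2 * C) := by rw [← pow_mul]
  have hsle : s ≤ s ^ (2 * C) := Nat.le_self_pow (by omega) s
  calc n ≤ 2 * n' := by omega
    _ ≤ s ^ (2 * C) * s ^ (2 * C) := Nat.mul_le_mul (by omega) h3
    _ = s ^ (4 * C) := by rw [← pow_add]; ring_nf

/-- If `A ⊆ ℕ^k` (positive coordinates) is complete with respect to `R = z + ℕ^k`,
then each coordinate projection of `A` is thick. -/
theorem stmt_0 (k : ℕ) (hk : 2 ≤ k) (z : Fin k → ℕ) (hz : ∀ i, 1 ≤ z i)
    (A : Set (Fin k → ℕ)) (hA : ∀ a ∈ A, ∀ i, 1 ≤ a i)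
    (hcomp : {x : Fin k → ℕ | ∃ w : Fin k → ℕ, (∀ i, 1 ≤ w i) ∧ x = z + w} ⊆ FS A) :
    ∀ i : Fin k, ∃ ε : ℝ, 0 < ε ∧ ∃ N₀ : ℕ, ∀ n : ℕ, N₀ ≤ n →
      (n : ℝ) ^ ε ≤ (({m : ℕ | (∃ a ∈ A, a i = m) ∧ m ≤ n}.ncard : ℝ)) := by
  intro i
  have h0 : (0 : ℕ) < k := by omega
  have h1 : (1 : ℕ) < k := by omega
  set i0 : Fin k := ⟨0, h0⟩ with hi0
  set i1 : Fin k := ⟨1, h1⟩ with hi1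
  set j : Fin k := if i = i0 then i1 else i0 with hj
  have hij : j ≠ i := by
    by_cases h : i = i0
    · rw [hj, if_pos h, h]
      intro hc
      have := congrArg Fin.val hc
      simp [hi0, hi1] at this
    · rw [hj, if_neg h]
      exact fun hc => h hc.symm
  set C := z j + 1 with hC
  have hC2 : 2 ≤ C := by have := hz j; omega
  have hCpos : (0 : ℝ) < (C : ℝ) := by exact_mod_cast (by omega : 0 < C)
  refine ⟨1 / (4 * (C : ℝ)), by positivity, 2 ^ C + 2 * z i + 1, ?_⟩
  intro n hn
  have hp : 1 ≤ 2 ^ C := Nat.one_le_two_pow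
  have hnn' : z i + (n - z i) = n := by omega
  have hkey := key_lemma i j hij z A hA hcomp n (n - z i) hnn'
  have h4 : n ≤ ({m : ℕ | (∃ a ∈ A, a i = m) ∧ m ≤ n}.ncard) ^ (4 * C) :=
    arith_lemma C _ n (n - z i) (z i) hC2 hn hnn' hkey
  set s := {m : ℕ | (∃ a ∈ A, a i = m) ∧ m ≤ n}.ncard with hs
  have hsR : (n : ℝ) ≤ (s : ℝ) ^ (4 * C : ℕ) := by exact_mod_cast h4
  have hstep : (n : ℝ) ^ ((1 : ℝ) / (4 * (C : ℝ))) ≤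
      ((s : ℝ) ^ (4 * C : ℕ)) ^ ((1 : ℝ) / (4 * (C : ℝ))) :=
    Real.rpow_le_rpow (by positivity) hsR (by positivity)
  have heq : ((s : ℝ) ^ (4 * C : ℕ)) ^ ((1 : ℝ) / (4 * (C : ℝ))) = (s : ℝ) := by
    rw [← Real.rpow_natCast (s : ℝ) (4 * C), ← Real.rpow_mul (by positivity)]
    rw [show ((4 * C : ℕ) : ℝ) * ((1 : ℝ) / (4 * (C : ℝ))) = 1 by
      push_cast; field_simp]
    exact Real.rpow_one _
  rw [heq] at hstep
  exact hstep
end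

section
/- Let v₁,...,v_k ∈ ℝ^k be linearly independent vectors. Let S = {a₁v₁+⋯+a_kv_k : a₁+⋯+a_k ≤ 1, a₁,...,a_k ≥ 0} be the simplex they generate, and let F = {a₁v₁+⋯+a_kv_k : a₁+⋯+a_k = 1, a₁,...,a_k ≥ 0} be its face. Fix λ with 0 < λ ≤ 1/k, and for each i ∈ {1,...,k} set S_i = λv_i + S and F_i = S_i ∩ F. Then F = ⋃_{i=1}^k F_i. -/
open scoped BigOperators

/-- Covering the face of a simplex by translates: if `0 < λ ≤ 1/k`, then the face `F`
of the simplex `S` generated by `v₁,…,v_k` is covered by the sets `F_i = (λvᵢ + S) ∩ F`. -/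
theorem stmt_1 (k : ℕ) (v : Fin k → (Fin k → ℝ)) (hv : LinearIndependent ℝ v)
    (S F : Set (Fin k → ℝ))
    (hS : S = {x | ∃ a : Fin k → ℝ, (∀ i, 0 ≤ a i) ∧ (∑ i, a i) ≤ 1 ∧ x = ∑ i, a i • v i})
    (hF : F = {x | ∃ a : Fin k → ℝ, (∀ i, 0 ≤ a i) ∧ (∑ i, a i) = 1 ∧ x = ∑ i, a i • v i})
    (lam : ℝ) (hlam0 : 0 < lam) (hlam : lam ≤ 1 / (k : ℝ)) :
    F = ⋃ i : Fin k, (((fun s => lam • v i + s) '' S) ∩ F) := by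
  ext x
  simp only [Set.mem_iUnion, Set.mem_inter_iff]
  constructor
  · intro hx
    obtain ⟨a, ha0, hasum, hax⟩ := hF ▸ hx
    -- k > 0 since sum = 1
    have hk : 0 < k := by
      by_contra h
      have : k = 0 := Nat.eq_zero_of_not_pos h
      subst this
      simp at hasum
    -- pigeonhole: some a i ≥ 1/k
    have : ∃ i, lam ≤ a i := by
      by_contra h
      push_neg at h
      have hlt : ∑ i, a i < ∑ _i : Fin k, lam :=
        Finset.sum_lt_sum_of_nonempty (by simp [Fin.pos_iff_nonempty.mp hk]) fun i _ => h i
      rw [hasum, Finset.sum_const, Finset.card_univ, Fintype.card_fin, nsmul_eq_mul] at hlt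
      have : (k : ℝ) * lam ≤ (k : ℝ) * (1 / k) :=
        mul_le_mul_of_nonneg_left hlam (Nat.cast_nonneg k)
      rw [mul_one_div, div_self (by positivity)] at this
      linarith
    obtain ⟨i, hi⟩ := this
    refine ⟨i, ⟨x - lam • v i, ?_, by module⟩, hx⟩
    rw [hS]
    refine ⟨fun j => a j - if j = i then lam else 0, fun j => ?_, ?_, ?_⟩
    · by_cases hji : j = i <;> simp [hji, ha0 j]
      subst hji; linarith
    · rw [Finset.sum_sub_distrib, hasum]
      simp [Finset.sum_ite_eq']
      linarith [hlam0.le]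
    · rw [hax]
      rw [Finset.sum_congr rfl (fun j _ => sub_smul (a j) _ (v j))]
      rw [Finset.sum_sub_distrib]
      have : ∑ j, (if j = i then lam else 0) • v j = lam • v i := by
        rw [Finset.sum_eq_single i] <;> simp_all
      rw [this]
  · rintro ⟨i, _, hx⟩
    exact hx
end

section
/- Let v₁,...,v_k ∈ ℝ^k be linearly independent vectors, let S be the simplex generated by v₁,...,v_k, and fix λ with 0 < λ ≤ 1/k. Set S_i = λv_i + S for i = 1,...,k, and let S' = {a₁(1+λ)v₁+⋯+a_k(1+λ)v_k : a₁+⋯+a_k ≤ 1, a₁,...,a_k ≥ 0} be the simplex generated by (1+λ)v₁,...,(1+λ)v_k. Then S' = S ∪ S₁ ∪ ⋯ ∪ S_k. -/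
open scoped BigOperators

/-- The simplex generated by `(1+λ)v₁,…,(1+λ)v_k` is the union of the simplex `S`
generated by `v₁,…,v_k` together with its translates `Sᵢ = λvᵢ + S`, when `0 < λ ≤ 1/k`. -/
theorem stmt_2 (k : ℕ) (v : Fin k → (Fin k → ℝ)) (hv : LinearIndependent ℝ v)
    (S S' : Set (Fin k → ℝ))
    (hS : S = {x | ∃ a : Fin k → ℝ, (∀ i, 0 ≤ a i) ∧ (∑ i, a i) ≤ 1 ∧ x = ∑ i, a i • v i})
    (lam : ℝ) (hlam0 : 0 < lam) (hlam : lam ≤ 1 / (k : ℝ))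
    (hS' : S' = {x | ∃ a : Fin k → ℝ, (∀ i, 0 ≤ a i) ∧ (∑ i, a i) ≤ 1 ∧
      x = ∑ i, a i • ((1 + lam) • v i)}) :
    S' = S ∪ ⋃ i : Fin k, ((fun s => lam • v i + s) '' S) := by
  have hlam1 : (0:ℝ) < 1 + lam := by linarith
  have hk : 0 < k := by
    by_contra h
    have hk0 : k = 0 := Nat.eq_zero_of_not_pos h
    subst hk0
    simp at hlam
    linarith
  have hklam : (k:ℝ) * lam ≤ 1 := by
    rw [le_div_iff₀ (by exact_mod_cast hk)] at hlam
    linarith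
  subst hS hS'
  ext x
  simp only [Set.mem_setOf_eq, Set.mem_union, Set.mem_iUnion, Set.mem_image]
  constructor
  · rintro ⟨a, ha0, ha1, rfl⟩
    set b : Fin k → ℝ := fun i => (1 + lam) * a i with hb
    have hb0 : ∀ i, 0 ≤ b i := fun i => mul_nonneg hlam1.le (ha0 i)
    have hbsum : ∑ i, b i ≤ 1 + lam := by
      have : ∑ i, b i = (1 + lam) * ∑ i, a i := by rw [Finset.mul_sum]
      rw [this]
      nlinarith
    have hx : ∑ i, a i • ((1+lam) • v i) = ∑ i, b i • v i := by
      refine Finset.sum_congr rfl fun i _ => ?_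
      rw [smul_smul, hb, mul_comm]
    rw [hx]
    by_cases hc : ∑ i, b i ≤ 1
    · exact Or.inl ⟨b, hb0, hc, rfl⟩
    · right
      push_neg at hc
      have hex : ∃ i, lam ≤ b i := by
        by_contra h
        push_neg at h
        have hlt : ∑ i, b i < ∑ _i : Fin k, lam :=
          Finset.sum_lt_sum_of_nonempty ⟨⟨0, hk⟩, Finset.mem_univ _⟩ fun i _ => h i
        rw [Finset.sum_const, Finset.card_univ, Fintype.card_fin, nsmul_eq_mul] at hlt
        linarith
      obtain ⟨i, hi⟩ := hex
      set c : Fin k → ℝ := fun j => b j - (if j = i then lam else 0) with hcdef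
      refine ⟨i, ∑ j, c j • v j, ⟨c, ?_, ?_, rfl⟩, ?_⟩
      · intro j
        by_cases hj : j = i <;> simp [hcdef, hj]
        · linarith
        · exact hb0 j
      · have : ∑ j, c j = (∑ j, b j) - lam := by
          rw [hcdef]
          rw [Finset.sum_sub_distrib, Finset.sum_ite_eq' Finset.univ i (fun _ => lam)]
          simp
        rw [this]; linarith
      · have : ∑ j, c j • v j = (∑ j, b j • v j) - lam • v i := by
          rw [hcdef]
          simp only [sub_smul]
          rw [Finset.sum_sub_distrib]
          congr 1
          simp [ite_smul]
        rw [this]; abel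
  · rintro (⟨a, ha0, ha1, rfl⟩ | ⟨i, _, ⟨a, ha0, ha1, rfl⟩, rfl⟩)
    · refine ⟨fun j => a j / (1 + lam), fun j => div_nonneg (ha0 j) hlam1.le, ?_, ?_⟩
      · rw [← Finset.sum_div, div_le_one hlam1]; linarith
      · refine Finset.sum_congr rfl fun j _ => ?_
        rw [smul_smul, div_mul_cancel₀ _ hlam1.ne']
    · refine ⟨fun j => (a j + if j = i then lam else 0) / (1 + lam), fun j => ?_, ?_, ?_⟩
      · apply div_nonneg _ hlam1.le
        by_cases hj : j = i
        · simp [hj]; linarith [ha0 i]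
        · simp [hj]; exact ha0 j
      · rw [← Finset.sum_div, div_le_one hlam1, Finset.sum_add_distrib,
          Finset.sum_ite_eq' Finset.univ i (fun _ => lam)]
        simp
        linarith
      · have : ∀ j, ((a j + if j = i then lam else 0) / (1 + lam)) • ((1 + lam) • v j)
            = a j • v j + (if j = i then lam else 0) • v j := by
          intro j
          rw [smul_smul, div_mul_cancel₀ _ hlam1.ne', add_smul]
        simp only [this]
        rw [Finset.sum_add_distrib]
        have h2 : ∑ x : Fin k, (if x = i then lam else 0) • v x = lam • v i := by
          simp [ite_smul]
        rw [h2]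
        abel
end

section
/- Suppose v₁,...,v_k ∈ ℕ^k are integer vectors with all coordinates positive that are linearly independent over ℝ, and none of the v_i is parallel to a coordinate axis. Let U = {a₁v₁+⋯+a_kv_k ∈ ℝ^k : a_i ∈ ℝ, a_i ≥ 0} be the cone they generate and V = U ∩ ℕ^k the set of lattice points in U. Let S be the set of all lattice points of ℕ^k lying in the simplex generated by kv₁,...,kv_k (i.e. in {a₁(kv₁)+⋯+a_k(kv_k) : a₁+⋯+a_k ≤ 1, all a_i ≥ 0}), let X_i = {2^j v_i : j = 0,1,2,...}, and let X = S ∪ X₁ ∪ ⋯ ∪ X_k. Then FS(X) = V. -/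
open scoped BigOperators

/-!
The lattice points of the cone are closed under addition and contain `X`, so `FS(X) ⊆ V`.
Conversely, write `p ∈ V` as `∑ aᵢ vᵢ` and split `aᵢ = ⌊aᵢ⌋ + rᵢ`. The integral part
`∑ ⌊aᵢ⌋ vᵢ` is a sum of distinct dyadic multiples `2ʲ vᵢ` (binary expansion of each `⌊aᵢ⌋`),
and the rest `s = ∑ rᵢ vᵢ` is an integer vector lying in the simplex spanned by the `k vᵢ`
because `∑ rᵢ < k`. As the `vᵢ` are positive, `s` is either `0` or has all coordinates
positive, i.e. lies in `S`. Linear independence makes coefficients unique, so the `2ʲ vᵢ` are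
pairwise distinct and none equals `s`, whose coefficients are `< 1`.
-/

open Finset

section FS

variable {α : Type*} [AddCommMonoid α] {X : Set α}

lemma FS_subset {V : AddSubsemigroup α} (h : X ⊆ V) : FS X ⊆ V := by
  rintro _ ⟨F, hF, hFX, rfl⟩
  exact F.sum_induction_nonempty id (· ∈ V) (fun _ _ => V.add_mem) hF (fun x hx => h (hFX hx))

lemma sum_mem_FS {F : Finset α} (hF : F.Nonempty) (hFX : ↑F ⊆ X) : ∑ x ∈ F, x ∈ FS X :=
  ⟨F, hF, hFX, rfl⟩

lemma add_sum_mem_FS [DecidableEq α] {x : α} {F : Finset α} (hx : x ∈ X) (hxF : x ∉ F)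
    (hFX : ↑F ⊆ X) : x + ∑ y ∈ F, y ∈ FS X := by
  have := sum_mem_FS (insert_nonempty x F) (by simpa [Set.insert_subset_iff] using ⟨hx, hFX⟩)
  rwa [sum_insert hxF] at this

end FS

variable {ι κ : Type*} [Fintype ι] (v : ι → κ → ℕ)

/-- The paper's `ℕ` is `{1, 2, …}`, so its lattice points have all coordinates `≥ 1`. -/
def latticeCone : AddSubsemigroup (κ → ℕ) where
  carrier := {p | (∀ j, 1 ≤ p j) ∧ ∃ a : ι → ℝ, (∀ i, 0 ≤ a i) ∧
      (fun j => (p j : ℝ)) = ∑ i, a i • (fun j => (v i j : ℝ))}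
  add_mem' := by
    rintro p q ⟨hp1, a, ha, hp⟩ ⟨hq1, b, hb, hq⟩
    refine ⟨fun j => (hp1 j).trans (Nat.le_add_right _ _), a + b,
      fun i => add_nonneg (ha i) (hb i), ?_⟩
    simp only [Pi.add_apply, Nat.cast_add, add_smul, sum_add_distrib, ← hp, ← hq]
    rfl

def latticeSimplex (c : ℕ) : Set (κ → ℕ) :=
  {p | (∀ j, 1 ≤ p j) ∧ ∃ a : ι → ℝ, (∀ i, 0 ≤ a i) ∧ (∑ i, a i) ≤ 1 ∧
      (fun j => (p j : ℝ)) = ∑ i, a i • (fun j => ((c * v i j : ℕ) : ℝ))}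

def dyadicMultiples : Set (κ → ℕ) :=
  ⋃ i, {p | ∃ n : ℕ, p = (2 ^ n) • v i}

variable {v}

lemma cast_eq_sum_smul_iff {p : κ → ℕ} {a : ι → ℝ} :
    (fun j => (p j : ℝ)) = ∑ i, a i • (fun j => (v i j : ℝ)) ↔
      ∀ j, (p j : ℝ) = ∑ i, a i * v i j := by
  simp [funext_iff, Finset.sum_apply]

lemma cast_two_pow_smul [DecidableEq ι] (i : ι) (n : ℕ) :
    (fun j => (((2 ^ n) • v i) j : ℝ)) =
      ∑ i', (Pi.single i ((2 : ℝ) ^ n) : ι → ℝ) i' • (fun j => (v i' j : ℝ)) := by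
  rw [cast_eq_sum_smul_iff]
  intro j
  simp [Pi.single_apply]

lemma latticeSimplex_subset_latticeCone (c : ℕ) : latticeSimplex v c ⊆ latticeCone v := by
  rintro p ⟨hp1, a, ha, -, hp⟩
  refine ⟨hp1, fun i => c * a i, fun i => mul_nonneg c.cast_nonneg (ha i), ?_⟩
  rw [hp]
  refine sum_congr rfl fun i _ => funext fun j => ?_
  simp only [Pi.smul_apply, smul_eq_mul, Nat.cast_mul]
  ring

lemma dyadicMultiples_subset_latticeCone (hpos : ∀ i j, 1 ≤ v i j) :
    dyadicMultiples v ⊆ latticeCone v := by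
  classical
  simp only [dyadicMultiples, Set.iUnion_subset_iff]
  rintro i _ ⟨n, rfl⟩
  refine ⟨fun j => ?_, Pi.single i (2 ^ n), fun i' => ?_, cast_two_pow_smul i n⟩
  · simpa using Nat.one_le_two_pow.trans (Nat.le_mul_of_pos_right _ (hpos i j))
  · rcases eq_or_ne i' i with rfl | hne
    · simp
    · simp [hne]


lemma eq_single_of_cast_eq_two_pow_smul [DecidableEq ι]
    (hli : LinearIndependent ℝ (fun i => (fun j => (v i j : ℝ)))) {a : ι → ℝ} {i : ι} {n : ℕ}
    (ha : (fun j => (((2 ^ n) • v i) j : ℝ)) = ∑ i', a i' • (fun j => (v i' j : ℝ))) :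
    a = Pi.single i (2 ^ n) :=
  funext (Fintype.linearIndependent_iffₛ.mp hli _ _ (ha.symm.trans (cast_two_pow_smul i n)))

lemma two_pow_smul_injective (hli : LinearIndependent ℝ (fun i => (fun j => (v i j : ℝ)))) :
    Function.Injective (fun x : Σ _ : ι, ℕ => (2 ^ x.2) • v x.1) := by
  classical
  rintro ⟨i, n⟩ ⟨i', n'⟩ h
  dsimp only at h
  have hs := eq_single_of_cast_eq_two_pow_smul hli (by rw [h]; exact cast_two_pow_smul i' n')
  obtain rfl : i' = i := by
    by_contra hne
    simpa [hne] using congrFun hs i'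
  have : (2 : ℝ) ^ n' = 2 ^ n := by simpa using congrFun hs i'
  obtain rfl := Nat.pow_right_injective le_rfl (by exact_mod_cast this : 2 ^ n' = 2 ^ n)
  rfl

lemma notMem_dyadicMultiples_of_lt_one
    (hli : LinearIndependent ℝ (fun i => (fun j => (v i j : ℝ)))) {s : κ → ℕ} {r : ι → ℝ}
    (hs : (fun j => (s j : ℝ)) = ∑ i, r i • (fun j => (v i j : ℝ))) (hr : ∀ i, r i < 1) :
    s ∉ dyadicMultiples v := by
  classical
  simp only [dyadicMultiples, Set.mem_iUnion, Set.mem_ofPred_eq, not_exists]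
  rintro i n rfl
  have hri : r i = 2 ^ n := by simpa using congrFun (eq_single_of_cast_eq_two_pow_smul hli hs) i
  linarith [hr i, one_le_pow₀ (one_le_two : (1 : ℝ) ≤ 2) (n := n)]

lemma exists_finset_subset_dyadicMultiples_sum_eq
    (hli : LinearIndependent ℝ (fun i => (fun j => (v i j : ℝ)))) (n : ι → ℕ) :
    ∃ P : Finset (κ → ℕ), ↑P ⊆ dyadicMultiples v ∧ ∑ x ∈ P, x = ∑ i, n i • v i := by
  classical
  refine ⟨(univ.sigma fun i => (n i).bitIndices.toFinset).image fun x => (2 ^ x.2) • v x.1, ?_, ?_⟩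
  · simp only [coe_image, Set.image_subset_iff]
    rintro ⟨i, m⟩ -
    exact Set.mem_iUnion.mpr ⟨i, m, rfl⟩
  · rw [sum_image fun x _ y _ h => two_pow_smul_injective hli h, sum_sigma]
    refine sum_congr rfl fun i _ => ?_
    dsimp only
    rw [← sum_smul, Finset.sum_toFinset_bitIndices_two_pow]

lemma exists_eq_sum_nsmul_add_frac {p : κ → ℕ} {a : ι → ℝ} (ha : ∀ i, 0 ≤ a i)
    (hp : (fun j => (p j : ℝ)) = ∑ i, a i • (fun j => (v i j : ℝ))) :
    ∃ (n : ι → ℕ) (r : ι → ℝ) (s : κ → ℕ), (∀ i, 0 ≤ r i ∧ r i < 1) ∧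
      (fun j => (s j : ℝ)) = ∑ i, r i • (fun j => (v i j : ℝ)) ∧ p = ∑ i, n i • v i + s := by
  rw [cast_eq_sum_smul_iff] at hp
  set m := ∑ i, ⌊a i⌋₊ • v i
  have hm : ∀ j, (m j : ℝ) = ∑ i, (⌊a i⌋₊ : ℝ) * v i j := fun j => by simp [m, Finset.sum_apply]
  have hmp : m ≤ p := fun j => by
    have : (m j : ℝ) ≤ p j := by
      rw [hm, hp]
      exact sum_le_sum fun i _ =>
        mul_le_mul_of_nonneg_right (Nat.floor_le (ha i)) (Nat.cast_nonneg _)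
    exact_mod_cast this
  refine ⟨fun i => ⌊a i⌋₊, fun i => a i - ⌊a i⌋₊, p - m, fun i =>
    ⟨sub_nonneg.mpr (Nat.floor_le (ha i)), by linarith [Nat.lt_floor_add_one (a i)]⟩, ?_,
    (add_tsub_cancel_of_le hmp).symm⟩
  rw [cast_eq_sum_smul_iff]
  intro j
  rw [Pi.sub_apply, Nat.cast_sub (hmp j), hp, hm, ← sum_sub_distrib]
  simp only [sub_mul]

lemma eq_zero_of_apply_eq_zero (hpos : ∀ i j, 1 ≤ v i j) {s : κ → ℕ} {r : ι → ℝ}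
    (hr : ∀ i, 0 ≤ r i) (hs : (fun j => (s j : ℝ)) = ∑ i, r i • (fun j => (v i j : ℝ)))
    {j : κ} (hj : s j = 0) : s = 0 := by
  rw [cast_eq_sum_smul_iff] at hs
  have hv : ∀ i j, (0 : ℝ) < v i j := fun i j => by exact_mod_cast hpos i j
  have hr0 : ∀ i, r i = 0 := by
    have := hs j
    rw [hj, Nat.cast_zero, eq_comm,
      sum_eq_zero_iff_of_nonneg fun i _ => mul_nonneg (hr i) (hv i j).le] at this
    exact fun i => (mul_eq_zero.mp (this i (mem_univ i))).resolve_right (hv i j).ne'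
  funext j'
  have : (s j' : ℝ) = 0 := (hs j').trans (by simp [hr0])
  exact_mod_cast this

lemma mem_latticeSimplex_card {s : κ → ℕ} {r : ι → ℝ} (hs1 : ∀ j, 1 ≤ s j)
    (hr0 : ∀ i, 0 ≤ r i) (hr1 : ∀ i, r i ≤ 1)
    (hs : (fun j => (s j : ℝ)) = ∑ i, r i • (fun j => (v i j : ℝ))) :
    s ∈ latticeSimplex v (Fintype.card ι) := by
  refine ⟨hs1, fun i => r i / Fintype.card ι, fun i => div_nonneg (hr0 i) (Nat.cast_nonneg _),
    ?_, ?_⟩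
  · rw [← sum_div]
    refine div_le_one_of_le₀ ?_ (Nat.cast_nonneg _)
    calc ∑ i, r i ≤ ∑ _i : ι, (1 : ℝ) := sum_le_sum fun i _ => hr1 i
      _ = Fintype.card ι := by simp
  · rw [hs]
    refine sum_congr rfl fun i _ => funext fun j => ?_
    have : (Fintype.card ι : ℝ) ≠ 0 := Nat.cast_ne_zero.mpr (Fintype.card_pos_iff.mpr ⟨i⟩).ne'
    simp only [Pi.smul_apply, smul_eq_mul, Nat.cast_mul]
    field_simp

theorem stmt_3_general (k : ℕ) (v : Fin k → (Fin k → ℕ))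
    (hpos : ∀ i j, 1 ≤ v i j)
    (hli : LinearIndependent ℝ (fun i => (fun j => (v i j : ℝ))))
    (V : Set (Fin k → ℕ))
    (hV : V = {p | (∀ j, 1 ≤ p j) ∧ ∃ a : Fin k → ℝ, (∀ i, 0 ≤ a i) ∧
      (fun j => (p j : ℝ)) = ∑ i, a i • (fun j => (v i j : ℝ))})
    (S : Set (Fin k → ℕ))
    (hS : S = {p | (∀ j, 1 ≤ p j) ∧ ∃ a : Fin k → ℝ, (∀ i, 0 ≤ a i) ∧ (∑ i, a i) ≤ 1 ∧
      (fun j => (p j : ℝ)) = ∑ i, a i • (fun j => ((k * v i j : ℕ) : ℝ))})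
    (X : Set (Fin k → ℕ))
    (hX : X = S ∪ ⋃ i : Fin k, {p | ∃ j : ℕ, p = (2 ^ j) • v i}) :
    FS X = V := by
  classical
  subst hV hS hX
  change FS (latticeSimplex v k ∪ dyadicMultiples v) = latticeCone v
  refine (FS_subset (Set.union_subset (latticeSimplex_subset_latticeCone k)
    (dyadicMultiples_subset_latticeCone hpos))).antisymm ?_
  rintro p ⟨hp1, a, ha, hp⟩
  obtain ⟨n, r, s, hr, hs, rfl⟩ := exists_eq_sum_nsmul_add_frac ha hp
  obtain ⟨P, hPX, hPsum⟩ := exists_finset_subset_dyadicMultiples_sum_eq hli n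
  rw [← hPsum] at hp1 ⊢
  by_cases hs1 : ∀ j, 1 ≤ s j
  · have hsS : s ∈ latticeSimplex v k := by
      simpa using mem_latticeSimplex_card hs1 (fun i => (hr i).1) (fun i => (hr i).2.le) hs
    have hsP : s ∉ P := fun h => notMem_dyadicMultiples_of_lt_one hli hs (fun i => (hr i).2) (hPX h)
    rw [add_comm]
    exact add_sum_mem_FS (Or.inl hsS) hsP (hPX.trans Set.subset_union_right)
  · obtain ⟨j, hj⟩ := not_forall.mp hs1
    obtain rfl := eq_zero_of_apply_eq_zero hpos (fun i => (hr i).1) hs (by omega : s j = 0)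
    rw [add_zero] at hp1 ⊢
    refine sum_mem_FS (nonempty_iff_ne_empty.mpr fun hP => ?_) (hPX.trans Set.subset_union_right)
    simpa [hP] using hp1 j

/-- For linearly independent positive integer vectors `v₁,…,v_k`, none parallel to a
coordinate axis, the set `X = S ∪ X₁ ∪ ⋯ ∪ X_k` (where `S` is the set of lattice points of
the simplex generated by `kv₁,…,kv_k` and `Xᵢ = {2^j vᵢ}`) satisfies `FS(X) = V`, the set of
lattice points of the cone generated by `v₁,…,v_k`. -/
theorem stmt_3 (k : ℕ) (v : Fin k → (Fin k → ℕ))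
    (hpos : ∀ i j, 1 ≤ v i j)
    (hli : LinearIndependent ℝ (fun i => (fun j => (v i j : ℝ))))
    (hax : ∀ i, ¬ ∃ j : Fin k, ∀ j' : Fin k, j' ≠ j → v i j' = 0)
    (V : Set (Fin k → ℕ))
    (hV : V = {p | (∀ j, 1 ≤ p j) ∧ ∃ a : Fin k → ℝ, (∀ i, 0 ≤ a i) ∧
      (fun j => (p j : ℝ)) = ∑ i, a i • (fun j => (v i j : ℝ))})
    (S : Set (Fin k → ℕ))
    (hS : S = {p | (∀ j, 1 ≤ p j) ∧ ∃ a : Fin k → ℝ, (∀ i, 0 ≤ a i) ∧ (∑ i, a i) ≤ 1 ∧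
      (fun j => (p j : ℝ)) = ∑ i, a i • (fun j => ((k * v i j : ℕ) : ℝ))})
    (X : Set (Fin k → ℕ))
    (hX : X = S ∪ ⋃ i : Fin k, {p | ∃ j : ℕ, p = (2 ^ j) • v i}) :
    FS X = V :=
  stmt_3_general k v hpos hli V hV S hS X hX
end

section
/- Let X = {(2^m, 2^k) : m, k ∈ ℤ, m ≥ 0, k ≥ 0} ⊆ ℕ², and let E = {(a,b) ∈ ℕ² : b ≤ log₂ a} ∪ {(a,b) ∈ ℕ² : a ≤ log₂ b}. Then ℕ² \ E ⊆ FS(X); that is, every pair (a,b) of positive integers with b > log₂ a and a > log₂ b can be written as a sum of finitely many distinct elements of X. -/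
open scoped BigOperators

/-- `X = {(2^m, 2^k) : m, k ≥ 0}`. -/
def X2 : Set (ℕ × ℕ) := {p | ∃ m k : ℕ, p = (2 ^ m, 2 ^ k)}

theorem List.sum_zip {M N : Type*} [AddMonoid M] [AddMonoid N] :
    ∀ {l₁ : List M} {l₂ : List N}, l₁.length = l₂.length → (l₁.zip l₂).sum = (l₁.sum, l₂.sum)
  | [], [], _ => rfl
  | x :: l₁, y :: l₂, h => by
    simp [List.sum_zip (l₁ := l₁) (l₂ := l₂) (by simpa using h)]

theorem List.sum_mem_FS {α : Type*} [AddCommMonoid α] [DecidableEq α] {X : Set α} {l : List α}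
    (hl : l ≠ []) (hnd : l.Nodup) (hX : ∀ x ∈ l, x ∈ X) : l.sum ∈ FS X :=
  ⟨l.toFinset, by simpa using hl, fun x hx => hX x (List.mem_toFinset.1 hx),
    by simp [List.sum_toFinset _ hnd]⟩

theorem map_mem_FS {α β F : Type*} [AddCommMonoid α] [AddCommMonoid β] [FunLike F α β]
    [AddMonoidHomClass F α β] {f : F} (hf : Function.Injective f) {X : Set α} {Y : Set β}
    (hXY : Set.MapsTo f X Y) {s : α} (hs : s ∈ FS X) : f s ∈ FS Y := by
  classical
  obtain ⟨A, hA, hAX, rfl⟩ := hs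
  refine ⟨A.image f, hA.image f, ?_, by rw [Finset.sum_image hf.injOn, map_sum]⟩
  simpa using hXY.mono_left hAX |>.image_subset

theorem Nat.length_bitIndices_le {n k : ℕ} (h : n < 2 ^ k) : n.bitIndices.length ≤ k := by
  have hsub : n.bitIndices.toFinset ⊆ Finset.range k := fun i hi =>
    Finset.mem_range.2 <| (Nat.pow_lt_pow_iff_right one_lt_two).1 <|
      (Nat.two_pow_le_of_mem_bitIndices (List.mem_toFinset.1 hi)).trans_lt h
  simpa [List.toFinset_card_of_nodup Nat.bitIndices_nodup] using Finset.card_le_card hsub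

theorem Nat.bitIndices_ne_nil {n : ℕ} (hn : n ≠ 0) : n.bitIndices ≠ [] := fun h =>
  hn (by simpa [h] using (Nat.sum_map_two_pow_bitIndices n).symm)

theorem Nat.exists_list_two_pow_sum {n t : ℕ} (hlo : n.bitIndices.length ≤ t) (hhi : t ≤ n) :
    ∃ l : List ℕ, l.length = t ∧ (l.map (2 ^ ·)).sum = n := by
  induction t, hlo using Nat.le_induction with
  | base => exact ⟨n.bitIndices, rfl, Nat.sum_map_two_pow_bitIndices n⟩
  | succ t _ ih =>
    obtain ⟨l, hlen, hsum⟩ := ih (by omega)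
    obtain ⟨m, hm⟩ : ∃ m, m + 1 ∈ l := by
      by_contra! h
      have hzero : ∀ x ∈ l, x = 0 := fun x hx => by
        cases x with
        | zero => rfl
        | succ m => exact absurd hx (h m)
      rw [List.eq_replicate_iff.2 ⟨hlen, hzero⟩] at hsum
      simp only [List.map_replicate, pow_zero, List.sum_replicate, smul_eq_mul, mul_one] at hsum
      omega
    refine ⟨m :: m :: l.erase (m + 1), ?_, ?_⟩
    · rw [List.length_cons, List.length_cons, List.length_erase_of_mem hm, hlen]
      have := List.length_pos_of_mem hm
      omega
    · have := ((List.perm_cons_erase hm).map (2 ^ ·)).sum_eq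
      simp only [List.map_cons, List.sum_cons] at this ⊢
      rw [pow_succ] at this
      omega

theorem mem_FS_X2_of_length_bitIndices_le {a b : ℕ} (hb : b ≠ 0)
    (hab : a.bitIndices.length ≤ b.bitIndices.length) (hba : b.bitIndices.length ≤ a) :
    (a, b) ∈ FS X2 := by
  obtain ⟨l, hlen, hsum⟩ := Nat.exists_list_two_pow_sum hab hba
  set P := (l.map (2 ^ ·)).zip (b.bitIndices.map (2 ^ ·))
  have hlen' : (l.map (2 ^ ·)).length = (b.bitIndices.map (2 ^ ·)).length := by simp [hlen]
  have hP : P.sum = (a, b) := by rw [List.sum_zip hlen', hsum, Nat.sum_map_two_pow_bitIndices]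
  refine hP ▸ List.sum_mem_FS ?_ ?_ ?_
  · simpa [P, List.zip_eq_nil_iff, ← List.length_eq_zero_iff, hlen] using Nat.bitIndices_ne_nil hb
  · refine List.Nodup.of_map Prod.snd ?_
    rw [List.map_snd_zip hlen'.ge]
    exact Nat.bitIndices_nodup.map (Nat.pow_right_injective le_rfl)
  · intro p hp
    obtain ⟨hp₁, hp₂⟩ := List.of_mem_zip hp
    obtain ⟨m, -, hm⟩ := List.mem_map.1 hp₁
    obtain ⟨k, -, hk⟩ := List.mem_map.1 hp₂
    exact ⟨m, k, by rw [hm, hk]⟩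

theorem Nat.lt_two_pow_of_logb_lt {x y : ℕ} (hx : 0 < x) (h : Real.logb 2 x < y) : x < 2 ^ y := by
  rw [Real.logb_lt_iff_lt_rpow one_lt_two (by positivity), Real.rpow_natCast] at h
  exact_mod_cast h

/-- Every `(a,b) ∈ ℕ²` with `b > log₂ a` and `a > log₂ b` belongs to `FS(X)`,
i.e. `ℕ² \ E ⊆ FS(X)`. -/
theorem stmt_5 (a b : ℕ) (ha : 1 ≤ a) (hb : 1 ≤ b)
    (h1 : Real.logb 2 a < (b : ℝ)) (h2 : Real.logb 2 b < (a : ℝ)) :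
    (a, b) ∈ FS X2 := by
  have hab := Nat.lt_two_pow_of_logb_lt ha h1
  have hba := Nat.lt_two_pow_of_logb_lt hb h2
  wlog h : a.bitIndices.length ≤ b.bitIndices.length generalizing a b
  · simpa using map_mem_FS (f := AddEquiv.prodComm) AddEquiv.prodComm.injective
      (by rintro _ ⟨m, k, rfl⟩; exact ⟨k, m, rfl⟩) (this b a hb ha h2 h1 hba hab (le_of_not_ge h))
  exact mem_FS_X2_of_length_bitIndices_le (by omega) h (Nat.length_bitIndices_le hba)
end

section
/- Let X = {(2^m, 2^k) : m, k ∈ ℤ, m ≥ 0, k ≥ 0} ⊆ ℕ² and E = {(a,b) ∈ ℕ² : b ≤ log₂ a} ∪ {(a,b) ∈ ℕ² : a ≤ log₂ b}. For every D ∈ ℕ there exist x₀, y₀ ∈ ℕ such that the square S_D = {(s₁,s₂) ∈ ℕ² : x₀ ≤ s₁ ≤ x₀ + D, y₀ ≤ s₂ ≤ y₀ + D} satisfies S_D ⊆ E and FS(X) ∩ S_D = ∅. -/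
open scoped BigOperators

/-- The exceptional set `E = {(a,b) : b ≤ log₂ a} ∪ {(a,b) : a ≤ log₂ b}` (in ℕ²). -/
def E2 : Set (ℕ × ℕ) := {p | (1 ≤ p.1 ∧ 1 ≤ p.2) ∧
  ((p.2 : ℝ) ≤ Real.logb 2 p.1 ∨ (p.1 : ℝ) ≤ Real.logb 2 p.2)}

/-!
If a sum of distinct points `(2^m, 2^k)` has second coordinate `b`, it has at most `b` terms, so
its first coordinate has binary digit sum at most `b`. Near `2^N - 1`, however, every number has
digit sum close to `N`, because the binary digit sum is subadditive (by Legendre's formula it is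
`n - v₂(n!)`, and `a! b! ∣ (a + b)!`). A square of side `D` with first coordinates just below
`2^(2D+2)` and second coordinates in `[1, D + 1]` therefore misses `FS(X)`, and it lies in `E`
since its second coordinates are at most the binary logarithm of its first ones.
-/

open scoped Nat

namespace Nat

theorem digits_sum_base_pow {b : ℕ} (hb : 1 < b) (k : ℕ) : (b.digits (b ^ k)).sum = 1 := by
  rw [← mul_one (b ^ k), digits_base_pow_mul hb one_pos, digits_of_lt b 1 one_ne_zero hb]
  simp

theorem digits_sum_base_pow_sub_one {b : ℕ} (hb : 1 < b) (k : ℕ) :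
    (b.digits (b ^ k - 1)).sum = (b - 1) * k := by
  induction k with
  | zero => simp
  | succ k ih =>
    have hpos : 0 < b ^ k := Nat.pow_pos (by omega)
    have hsplit : b ^ (k + 1) - 1 = (b - 1) + b * (b ^ k - 1) := by
      rw [pow_succ', Nat.mul_sub_one]
      have : b ≤ b * b ^ k := Nat.le_mul_of_pos_right b hpos
      omega
    rw [hsplit, digits_add b hb _ _ (by omega) (Or.inl (by omega)), List.sum_cons, ih]
    ring

section Prime

variable {p : ℕ} [Fact p.Prime]

theorem sub_one_mul_padicValNat_factorial_add_digits_sum (n : ℕ) :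
    (p - 1) * padicValNat p n ! + (p.digits n).sum = n := by
  rw [sub_one_mul_padicValNat_factorial, Nat.sub_add_cancel (digit_sum_le p n)]

theorem digits_sum_add_le (a b : ℕ) :
    (p.digits (a + b)).sum ≤ (p.digits a).sum + (p.digits b).sum := by
  have hval : padicValNat p a ! + padicValNat p b ! ≤ padicValNat p (a + b)! := by
    rw [← padicValNat_dvd_iff_le (factorial_ne_zero _), pow_add]
    exact (mul_dvd_mul pow_padicValNat_dvd pow_padicValNat_dvd).trans
      (factorial_mul_factorial_dvd_factorial_add a b)
  have := Nat.mul_le_mul_left (p - 1) hval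
  have ha := sub_one_mul_padicValNat_factorial_add_digits_sum (p := p) a
  have hb := sub_one_mul_padicValNat_factorial_add_digits_sum (p := p) b
  have hab := sub_one_mul_padicValNat_factorial_add_digits_sum (p := p) (a + b)
  rw [Nat.mul_add] at this
  omega

theorem digits_sum_finset_sum_le {ι : Type*} (s : Finset ι) (f : ι → ℕ) :
    (p.digits (∑ i ∈ s, f i)).sum ≤ ∑ i ∈ s, (p.digits (f i)).sum :=
  Finset.le_sum_of_subadditive (fun n ↦ (p.digits n).sum) (by simp) digits_sum_add_le s f

theorem sub_one_mul_le_digits_sum_add {n m N : ℕ}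
    (h : n + m + 1 = p ^ N) : (p - 1) * N ≤ (p.digits n).sum + m := by
  calc (p - 1) * N = (p.digits (n + m)).sum := by
        rw [← digits_sum_base_pow_sub_one (Fact.out : p.Prime).one_lt N, ← h, Nat.add_sub_cancel]
    _ ≤ (p.digits n).sum + (p.digits m).sum := digits_sum_add_le n m
    _ ≤ (p.digits n).sum + m := Nat.add_le_add_left (digit_sum_le p m) _

end Prime

end Nat

theorem digits_sum_fst_le_snd_of_mem_FS {q : ℕ × ℕ} (hq : q ∈ FS X2) :
    (Nat.digits 2 q.1).sum ≤ q.2 := by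
  obtain ⟨F, -, hsub, rfl⟩ := hq
  rw [Prod.fst_sum, Prod.snd_sum]
  refine (Nat.digits_sum_finset_sum_le F _).trans (Finset.sum_le_sum fun x hx ↦ ?_)
  obtain ⟨m, k, rfl⟩ := hsub hx
  rw [Nat.digits_sum_base_pow one_lt_two]
  exact Nat.one_le_two_pow

theorem mem_E2_of_two_pow_le {a b : ℕ} (hb : 1 ≤ b) (hab : 2 ^ b ≤ a) : (a, b) ∈ E2 := by
  have ha : 1 ≤ a := Nat.one_le_two_pow.trans hab
  refine ⟨⟨ha, hb⟩, Or.inl ?_⟩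
  rw [Real.le_logb_iff_rpow_le one_lt_two (by exact_mod_cast ha), Real.rpow_natCast]
  exact_mod_cast hab

theorem stmt_6_general (D : ℕ) :
    ∃ x₀ y₀ : ℕ, 1 ≤ x₀ ∧ 1 ≤ y₀ ∧
      {p : ℕ × ℕ | x₀ ≤ p.1 ∧ p.1 ≤ x₀ + D ∧ y₀ ≤ p.2 ∧ p.2 ≤ y₀ + D} ⊆ E2 ∧
      FS X2 ∩ {p : ℕ × ℕ | x₀ ≤ p.1 ∧ p.1 ≤ x₀ + D ∧ y₀ ≤ p.2 ∧ p.2 ≤ y₀ + D} = ∅ := by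
  have hpos : 0 < 2 ^ D := Nat.two_pow_pos D
  have hroom : 2 ^ (D + 1) + D + 1 ≤ 2 ^ (2 * D + 2) := by
    have hD : D + 1 < 2 ^ (D + 1) := Nat.lt_two_pow_self
    have hsq : 2 ^ (2 * D + 2) = 2 ^ (D + 1) * 2 ^ (D + 1) := by rw [← pow_add]; ring_nf
    rw [hsq]
    nlinarith
  refine ⟨2 ^ (2 * D + 2) - 1 - D, 1, by omega, le_rfl, ?_, ?_⟩
  · rintro ⟨a, b⟩ ⟨ha, -, hb, hb'⟩
    exact mem_E2_of_two_pow_le hb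
      ((Nat.pow_le_pow_right two_pos (by omega : b ≤ D + 1)).trans (by omega))
  · refine Set.eq_empty_of_forall_notMem ?_
    rintro ⟨a, b⟩ ⟨hq, ha, ha', -, hb⟩
    have hupper := digits_sum_fst_le_snd_of_mem_FS hq
    have hlower := Nat.sub_one_mul_le_digits_sum_add (p := 2) (n := a)
      (m := 2 ^ (2 * D + 2) - 1 - a) (N := 2 * D + 2) (by omega)
    simp only [show 2 - 1 = 1 from rfl, one_mul] at hupper hlower
    omega

/-- `E` contains arbitrarily large squares entirely avoiding `FS(X)`. -/
theorem stmt_6 (D : ℕ) (hD : 1 ≤ D) :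
    ∃ x₀ y₀ : ℕ, 1 ≤ x₀ ∧ 1 ≤ y₀ ∧
      {p : ℕ × ℕ | x₀ ≤ p.1 ∧ p.1 ≤ x₀ + D ∧ y₀ ≤ p.2 ∧ p.2 ≤ y₀ + D} ⊆ E2 ∧
      FS X2 ∩ {p : ℕ × ℕ | x₀ ≤ p.1 ∧ p.1 ≤ x₀ + D ∧ y₀ ≤ p.2 ∧ p.2 ≤ y₀ + D} = ∅ :=
  stmt_6_general D
end

section
/- Let X = {(2^m, 2^k) : m, k ∈ ℤ, m ≥ 0, k ≥ 0} ⊆ ℕ² and E = {(a,b) ∈ ℕ² : b ≤ log₂ a} ∪ {(a,b) ∈ ℕ² : a ≤ log₂ b}. For every integer M > 2^64 there exist z₀, w₀ such that the square S_M = {(t₁,t₂) ∈ ℕ² : z₀ ≤ t₁ ≤ z₀ + M, w₀ ≤ t₂ ≤ w₀ + M} satisfies S_M ⊆ E and |FS(X) ∩ S_M| ≥ (1/4)·M·log₂ M. -/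
open scoped BigOperators

/-!
Take `z₀ = 2 ^ (M + 1)` and `w₀ = 1`: points of the square have first coordinate at least
`2 ^ (M + 1)` and second coordinate at most `M + 1`, so they lie in `E`.

Let `2 ^ (a + 1) ≤ M < 2 ^ (a + 2)`. For `T ⊆ {0, …, a - 1}` and a two-element
`s ⊆ {0, …, a - 1}`, the distinct elements `(2^i, 2^i)`, `i ∈ T`, and `(2^M, 2^k)`, `k ∈ s`,
of `X` sum to `(2 ^ (M + 1) + t, σ + t)`, where `t` and `σ` are the numbers with binary digit sets
`T` and `s`. These points lie in the square, and uniqueness of binary expansions makes them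
pairwise distinct. Their number `2 ^ a · C(a, 2)` is at least `2 ^ a (a + 2) ≥ (1/4) M log₂ M`.
-/

open Finset

def square (z w M : ℕ) : Set (ℕ × ℕ) := {p | z ≤ p.1 ∧ p.1 ≤ z + M ∧ w ≤ p.2 ∧ p.2 ≤ w + M}

lemma square_finite (z w M : ℕ) : (square z w M).Finite :=
  (Set.finite_Icc (z, w) (z + M, w + M)).subset fun _ ⟨h₁, h₂, h₃, h₄⟩ => ⟨⟨h₁, h₃⟩, ⟨h₂, h₄⟩⟩

lemma square_subset_E2 {z w M : ℕ} (hw : 1 ≤ w) (hz : 2 ^ (w + M) ≤ z) : square z w M ⊆ E2 := by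
  rintro p ⟨hz₁, -, hw₁, hw₂⟩
  have hlog : w + M ≤ Nat.log 2 p.1 := Nat.le_log_of_pow_le one_lt_two (hz.trans hz₁)
  refine ⟨⟨(Nat.one_le_two_pow.trans hz).trans hz₁, hw.trans hw₁⟩, Or.inl ?_⟩
  calc (p.2 : ℝ) ≤ Nat.log 2 p.1 := by exact_mod_cast hw₂.trans hlog
    _ ≤ Real.logb 2 p.1 := by exact_mod_cast Real.natLog_le_logb p.1 2

lemma sum_two_pow_mem_FS_X2 {P : Finset (ℕ × ℕ)} (hP : P.Nonempty) :
    ∑ p ∈ P, ((2 : ℕ) ^ p.1, (2 : ℕ) ^ p.2) ∈ FS X2 := by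
  have hinj : Set.InjOn (fun p : ℕ × ℕ => ((2 : ℕ) ^ p.1, (2 : ℕ) ^ p.2)) P := fun _ _ _ _ h =>
    Prod.ext (Nat.pow_right_injective le_rfl (Prod.mk.inj h).1)
      (Nat.pow_right_injective le_rfl (Prod.mk.inj h).2)
  refine ⟨P.image _, hP.image _, ?_, by rw [sum_image hinj]⟩
  simp only [coe_image, Set.image_subset_iff]
  exact fun p _ => ⟨p.1, p.2, rfl⟩

lemma mem_FS_X2_of_finsets {N : ℕ} {T s : Finset ℕ} (hT : ∀ i ∈ T, i < N) (hs : s.Nonempty) :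
    (#s * 2 ^ N + ∑ i ∈ T, 2 ^ i, ∑ k ∈ s, 2 ^ k + ∑ i ∈ T, 2 ^ i) ∈ FS X2 := by
  have hdisj : Disjoint (s.image (N, ·)) (T.image fun i => (i, i)) := by
    simp only [disjoint_left, mem_image]
    rintro _ ⟨k, -, rfl⟩ ⟨i, hi, hik⟩
    exact (hT i hi).ne (Prod.mk.inj hik).1
  have hne : (s.image (N, ·) ∪ T.image fun i => (i, i)).Nonempty :=
    (hs.image _).mono subset_union_left
  have hsum := sum_two_pow_mem_FS_X2 hne
  rw [sum_union hdisj, sum_image (fun _ _ _ _ h => (Prod.mk.inj h).2),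
    sum_image (fun _ _ _ _ h => (Prod.mk.inj h).1)] at hsum
  convert hsum using 1
  ext <;> simp [Prod.fst_sum, Prod.snd_sum]

lemma mem_FS_X2_inter_square {a M : ℕ} (h : 2 ^ (a + 1) ≤ M) {T s : Finset ℕ}
    (hT : T ⊆ range a) (hs : s ⊆ range a) (hs2 : #s = 2) :
    (2 * 2 ^ M + ∑ i ∈ T, 2 ^ i, ∑ k ∈ s, 2 ^ k + ∑ i ∈ T, 2 ^ i) ∈
      FS X2 ∩ square (2 * 2 ^ M) 1 M := by
  have haM : a < M :=
    (Nat.lt_two_pow_self.trans (Nat.pow_lt_pow_right one_lt_two a.lt_succ_self)).trans_le h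
  have hsne : s.Nonempty := card_pos.mp (by omega)
  refine ⟨hs2 ▸ mem_FS_X2_of_finsets (fun i hi => (mem_range.mp (hT hi)).trans haM) hsne, ?_⟩
  have hT_lt : ∑ i ∈ T, 2 ^ i < 2 ^ a := Nat.geomSum_lt le_rfl fun _ hi => mem_range.mp (hT hi)
  have hs_lt : ∑ k ∈ s, 2 ^ k < 2 ^ a := Nat.geomSum_lt le_rfl fun _ hk => mem_range.mp (hs hk)
  have hs_pos : 0 < ∑ k ∈ s, 2 ^ k := sum_pos (fun _ _ => by positivity) hsne
  rw [pow_succ] at h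
  refine ⟨Nat.le_add_right _ _, ?_, ?_, ?_⟩ <;> dsimp only <;> omega

lemma two_pow_mul_choose_two_le_ncard {a M : ℕ} (h : 2 ^ (a + 1) ≤ M) :
    2 ^ a * a.choose 2 ≤ (FS X2 ∩ square (2 * 2 ^ M) 1 M).ncard := by
  let D := (range a).powerset ×ˢ (range a).powersetCard 2
  have hD : #D = 2 ^ a * a.choose 2 := by simp [D, card_product]
  rw [← hD, ← Set.ncard_coe_finset]
  refine Set.ncard_le_ncard_of_injOn
    (fun q => (2 * 2 ^ M + ∑ i ∈ q.1, 2 ^ i, ∑ k ∈ q.2, 2 ^ k + ∑ i ∈ q.1, 2 ^ i)) ?_ ?_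
    ((square_finite _ _ _).inter_of_right _)
  · rintro ⟨T, s⟩ hq
    simp only [D, coe_product, Set.mem_prod, mem_coe, mem_powerset, mem_powersetCard] at hq
    exact mem_FS_X2_inter_square h hq.1 hq.2.1 hq.2.2
  · rintro ⟨T, s⟩ - ⟨T', s'⟩ - hq
    simp only [Prod.mk.injEq] at hq
    obtain rfl : T = T' := geomSum_injective le_rfl (by simpa using hq.1)
    exact Prod.ext rfl (geomSum_injective le_rfl (by simpa using hq.2))

lemma mul_logb_two_le (M : ℕ) :
    (M : ℝ) * Real.logb 2 M ≤ 2 ^ (Nat.log 2 M + 1) * (Nat.log 2 M + 1) := by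
  have hlog : Real.logb 2 M ≤ Nat.log 2 M + 1 := by
    have := Nat.lt_floor_add_one (Real.logb 2 M)
    rw [show (2 : ℝ) = (2 : ℕ) by norm_num, Real.natFloor_logb_natCast] at this
    exact_mod_cast this.le
  have hM : (M : ℝ) ≤ 2 ^ (Nat.log 2 M + 1) := by
    exact_mod_cast (Nat.lt_pow_succ_log_self one_lt_two M).le
  have hlog0 : 0 ≤ Real.logb 2 M := by
    exact_mod_cast (Nat.cast_nonneg _).trans (Real.natLog_le_logb M 2)
  exact mul_le_mul hM hlog hlog0 (by positivity)

/-- For every `M > 2^64` there is an `M × M` square inside `E` containing at least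
`(1/4)·M·log₂ M` points of `FS(X)`. -/
theorem stmt_8 (M : ℕ) (hM : 2 ^ 64 < M) :
    ∃ z₀ w₀ : ℕ, 1 ≤ z₀ ∧ 1 ≤ w₀ ∧
      {p : ℕ × ℕ | z₀ ≤ p.1 ∧ p.1 ≤ z₀ + M ∧ w₀ ≤ p.2 ∧ p.2 ≤ w₀ + M} ⊆ E2 ∧
      (1 / 4 : ℝ) * M * Real.logb 2 M ≤
        (((FS X2 ∩ {p : ℕ × ℕ | z₀ ≤ p.1 ∧ p.1 ≤ z₀ + M ∧ w₀ ≤ p.2 ∧ p.2 ≤ w₀ + M}).ncard : ℝ)) := by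
  have hlog : 64 ≤ Nat.log 2 M := Nat.le_log_of_pow_le one_lt_two hM.le
  obtain ⟨a, ha⟩ : ∃ a, Nat.log 2 M = a + 1 := ⟨Nat.log 2 M - 1, by omega⟩
  have hpow : 2 ^ (a + 1) ≤ M := ha ▸ Nat.pow_log_le_self 2 (by omega)
  have hchoose : a + 2 ≤ a.choose 2 := by
    obtain ⟨b, rfl⟩ : ∃ b, a = b + 1 := ⟨a - 1, by omega⟩
    rw [Nat.choose_two_right, Nat.add_sub_cancel]
    exact (Nat.le_div_iff_mul_le two_pos).mpr (by nlinarith)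
  refine ⟨2 * 2 ^ M, 1, Nat.one_le_two_pow.trans (Nat.le_mul_of_pos_left _ two_pos), le_rfl,
    square_subset_E2 le_rfl (by rw [add_comm, pow_succ, mul_comm]), ?_⟩
  calc (1 / 4 : ℝ) * M * Real.logb 2 M ≤ (1 / 4) * (2 ^ (a + 2) * (a + 2)) := by
        rw [mul_assoc]
        have := mul_logb_two_le M
        rw [ha] at this
        push_cast at this
        linarith
    _ = ((2 ^ a * (a + 2) : ℕ) : ℝ) := by push_cast; ring
    _ ≤ _ := by
        exact_mod_cast (Nat.mul_le_mul_left _ hchoose).trans (two_pow_mul_choose_two_le_ncard hpow)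
end

section
/- For every infinite set A ⊆ ℕ there exists an infinite set B ⊆ ℕ such that FS(A × B) contains no infinite arithmetic progression of type B; that is, there are no starting point (x₀,y₀) ∈ ℕ² and difference (d₁,d₂) with d₁ ≥ 1 and d₂ ≥ 1 such that (x₀ + l·d₁, y₀ + l·d₂) ∈ FS(A × B) for all l = 0, 1, 2, .... -/
open scoped BigOperators

/-! If `A ⊆ ℕ⁺` and `(x, y) ∈ FS(A × B)`, the `k` summands with a given second coordinate `b`
have distinct positive first coordinates, so `k (k + 1) / 2 ≤ x` and `k ≤ √(2x)`; hence
`y ≤ √(2x) · ∑ {b ∈ B | b ≤ y}`. Take `B = {2 ^ 4 ^ k | k ∈ ℕ}`, and for large `n` put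
`G = 2 ^ 4 ^ n`, so that the next element of `B` is `G⁴`. An arithmetic progression of type B has
a term with `G⁴ - d₂ ≤ y < G⁴`; for it `x = O(G⁵)` and the elements of `B` below `y` sum to at
most `2G`, so `y = O(G^(7/2))`, which is absurd. -/

open Finset

theorem card_mul_succ_le_two_mul_sum (s : Finset ℕ) (hs : ∀ a ∈ s, 1 ≤ a) :
    #s * (#s + 1) ≤ 2 * ∑ a ∈ s, a := by
  induction s using Finset.induction_on_max with
  | empty => simp
  | insert a s hlt ih =>
    have ha : a ∉ s := fun h => lt_irrefl a (hlt a h)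
    have hcard : #s < a := by
      have := card_le_card fun b hb => mem_Ico.2 ⟨hs b (mem_insert_of_mem hb), hlt b hb⟩
      rw [Nat.card_Ico] at this
      have := hs a (mem_insert_self a s)
      omega
    have := ih fun b hb => hs b (mem_insert_of_mem hb)
    rw [card_insert_of_notMem ha, sum_insert ha]
    nlinarith

theorem card_mul_self_le_two_mul_sum_fst {β : Type*} {F : Finset (ℕ × β)}
    (hF : ∀ p ∈ F, 1 ≤ p.1) (hinj : Set.InjOn Prod.fst (F : Set (ℕ × β))) :
    #F * #F ≤ 2 * ∑ p ∈ F, p.1 := by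
  have h := card_mul_succ_le_two_mul_sum (F.image Prod.fst) (by simpa using hF)
  rw [card_image_of_injOn hinj, sum_image hinj] at h
  nlinarith

theorem snd_le_sqrt_mul_sum_of_mem_FS {A B : Set ℕ} (hA : ∀ a ∈ A, 1 ≤ a) {x y : ℕ}
    (hxy : (x, y) ∈ FS (A ×ˢ B)) {T : Finset ℕ} (hT : ∀ b ∈ B, b ≤ y → b ∈ T) :
    y ≤ Nat.sqrt (2 * x) * ∑ b ∈ T, b := by
  obtain ⟨F, -, hFAB, hsum⟩ := hxy
  have hx : x = ∑ p ∈ F, p.1 := by simpa [Prod.fst_sum] using congrArg Prod.fst hsum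
  have hy : y = ∑ p ∈ F, p.2 := by simpa [Prod.snd_sum] using congrArg Prod.snd hsum
  have hmem : ∀ p ∈ F, p.1 ∈ A ∧ p.2 ∈ B := fun p hp => hFAB hp
  have hfiber : ∀ b, #{p ∈ F | p.2 = b} ≤ Nat.sqrt (2 * x) := by
    intro b
    rw [Nat.le_sqrt, hx]
    refine (card_mul_self_le_two_mul_sum_fst (fun p hp => hA _ (hmem p (mem_filter.1 hp).1).1)
      fun p hp q hq h => Prod.ext h ?_).trans ?_
    · simp_all
    · exact Nat.mul_le_mul_left 2 (sum_le_sum_of_subset (filter_subset _ F))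
  have hsub : F.image Prod.snd ⊆ T := by
    simp only [subset_iff, mem_image, forall_exists_index, and_imp]
    rintro _ p hp rfl
    exact hT _ (hmem p hp).2 (hy ▸ single_le_sum (f := Prod.snd) (by simp) hp)
  calc y = ∑ b ∈ F.image Prod.snd, #{p ∈ F | p.2 = b} • b := hy.trans (sum_comp id Prod.snd)
    _ ≤ ∑ b ∈ F.image Prod.snd, Nat.sqrt (2 * x) * b :=
        sum_le_sum fun b _ => Nat.mul_le_mul_right b (hfiber b)
    _ ≤ Nat.sqrt (2 * x) * ∑ b ∈ T, b := by
        rw [← mul_sum]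
        exact Nat.mul_le_mul_left _ (sum_le_sum_of_subset hsub)

theorem sum_range_succ_le_two_mul_of_two_mul_le_succ {f : ℕ → ℕ}
    (hf : ∀ i, 2 * f i ≤ f (i + 1)) (n : ℕ) : ∑ i ∈ range (n + 1), f i ≤ 2 * f n := by
  induction n with
  | zero => simp only [zero_add, sum_range_one]; omega
  | succ n ih => rw [sum_range_succ]; linarith [hf n]

theorem Nat.exists_add_mul_lt_le_add {y₀ d N : ℕ} (hd : 0 < d) (hN : y₀ < N) :
    ∃ l, y₀ + l * d < N ∧ N ≤ y₀ + l * d + d := by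
  refine ⟨(N - 1 - y₀) / d, ?_⟩
  have h1 := Nat.div_add_mod' (N - 1 - y₀) d
  have h2 := Nat.mod_lt (N - 1 - y₀) hd
  omega

theorem sqrt_mul_lt_of_pow_four_le_add {G x y : ℕ} (hG : 13 ≤ G) (hy : y < G ^ 4)
    (hyG : G ^ 4 ≤ y + G) (hx : x ≤ G + G ^ 5) : Nat.sqrt (2 * x) * (2 * G) < y := by
  by_contra! hle
  have hyx : y * y ≤ 8 * G ^ 2 * x := calc
    y * y ≤ (Nat.sqrt (2 * x) * (2 * G)) * (Nat.sqrt (2 * x) * (2 * G)) :=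
      Nat.mul_self_le_mul_self hle
    _ = (Nat.sqrt (2 * x) * Nat.sqrt (2 * x)) * (4 * G ^ 2) := by ring
    _ ≤ 8 * G ^ 2 * x := by nlinarith [Nat.sqrt_le (2 * x)]
  have h1 : G ^ 8 ≤ y * y + 2 * G * y + G ^ 2 := by nlinarith
  have h2 : y * y ≤ 8 * G ^ 3 + 8 * G ^ 7 := hyx.trans (by nlinarith)
  have h3 : 2 * G * y ≤ 2 * G ^ 5 := by nlinarith
  have h4 : 8 * G ^ 3 + 2 * G ^ 5 + G ^ 2 ≤ G ^ 7 := by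
    have : G ^ 2 ≤ G ^ 3 := Nat.pow_le_pow_right (by omega) (by norm_num)
    have : G ^ 3 ≤ G ^ 5 := Nat.pow_le_pow_right (by omega) (by norm_num)
    have : 11 * G ^ 5 ≤ G ^ 7 := by nlinarith
    omega
  have h5 : 13 * G ^ 7 ≤ G ^ 8 := by nlinarith
  have : 0 < G ^ 7 := by positivity
  omega

def twoPowFourPow (n : ℕ) : ℕ := 2 ^ 4 ^ n

theorem twoPowFourPow_strictMono : StrictMono twoPowFourPow := fun _ _ hij =>
  Nat.pow_lt_pow_right one_lt_two (Nat.pow_lt_pow_right (by norm_num) hij)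

theorem twoPowFourPow_succ (n : ℕ) : twoPowFourPow (n + 1) = twoPowFourPow n ^ 4 := by
  simp only [twoPowFourPow, pow_succ, pow_mul]

theorem lt_twoPowFourPow (n : ℕ) : n < twoPowFourPow n :=
  (Nat.lt_pow_self (by norm_num)).trans Nat.lt_two_pow_self

theorem two_mul_twoPowFourPow_le_succ (n : ℕ) :
    2 * twoPowFourPow n ≤ twoPowFourPow (n + 1) := by
  have h2 : 2 ≤ twoPowFourPow n := Nat.le_self_pow (by positivity) 2
  have h24 : twoPowFourPow n ^ 2 ≤ twoPowFourPow n ^ 4 :=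
    Nat.pow_le_pow_right (by omega) (by norm_num)
  rw [twoPowFourPow_succ]
  nlinarith

theorem stmt_12_general (A : Set ℕ) (hA1 : ∀ a ∈ A, 1 ≤ a) :
    ∃ B : Set ℕ, (∀ b ∈ B, 1 ≤ b) ∧ B.Infinite ∧
      ¬ ∃ (x₀ y₀ d₁ d₂ : ℕ), 1 ≤ x₀ ∧ 1 ≤ y₀ ∧ 1 ≤ d₁ ∧ 1 ≤ d₂ ∧
        ∀ l : ℕ, (x₀ + l * d₁, y₀ + l * d₂) ∈ FS (A ×ˢ B) := by
  refine ⟨Set.range twoPowFourPow, ?_,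
    Set.infinite_range_of_injective twoPowFourPow_strictMono.injective, ?_⟩
  · rintro _ ⟨i, rfl⟩
    exact Nat.one_le_two_pow
  rintro ⟨x₀, y₀, d₁, d₂, -, -, -, hd₂, hAP⟩
  set n := x₀ + y₀ + d₁ + d₂ + 13
  set G := twoPowFourPow n
  have hnG : n < G := lt_twoPowFourPow n
  have hG4 : G ≤ G ^ 4 := Nat.le_self_pow (by norm_num) G
  have hGn : twoPowFourPow (n + 1) = G ^ 4 := twoPowFourPow_succ n
  obtain ⟨l, hlt, hle⟩ := Nat.exists_add_mul_lt_le_add (y₀ := y₀) (N := G ^ 4) hd₂ (by omega)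
  have hT : ∀ b ∈ Set.range twoPowFourPow, b ≤ y₀ + l * d₂ →
      b ∈ (range (n + 1)).image twoPowFourPow := by
    rintro _ ⟨i, rfl⟩ hi
    refine mem_image_of_mem _ (mem_range.2 (twoPowFourPow_strictMono.lt_iff_lt.1 ?_))
    rw [hGn]
    omega
  have hS : ∑ b ∈ (range (n + 1)).image twoPowFourPow, b ≤ 2 * G := by
    rw [sum_image twoPowFourPow_strictMono.injective.injOn]
    exact sum_range_succ_le_two_mul_of_two_mul_le_succ two_mul_twoPowFourPow_le_succ n
  have hx : x₀ + l * d₁ ≤ G + G ^ 5 := by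
    have hl : l ≤ G ^ 4 := (Nat.le_mul_of_pos_right l hd₂).trans (by omega)
    have : l * d₁ ≤ G ^ 5 := calc
      l * d₁ ≤ G ^ 4 * G := Nat.mul_le_mul hl (by omega)
      _ = G ^ 5 := by ring
    omega
  have hy := snd_le_sqrt_mul_sum_of_mem_FS hA1 (hAP l) hT
  exact (sqrt_mul_lt_of_pow_four_le_add (by omega) hlt (by omega) hx).not_ge
    (hy.trans (Nat.mul_le_mul_left _ hS))

/-- For every infinite `A ⊆ ℕ` there is an infinite `B ⊆ ℕ` such that `FS(A × B)`
contains no infinite arithmetic progression of type B (difference with both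
coordinates nonzero). -/
theorem stmt_12 (A : Set ℕ) (hA1 : ∀ a ∈ A, 1 ≤ a) (hAinf : A.Infinite) :
    ∃ B : Set ℕ, (∀ b ∈ B, 1 ≤ b) ∧ B.Infinite ∧
      ¬ ∃ (x₀ y₀ d₁ d₂ : ℕ), 1 ≤ x₀ ∧ 1 ≤ y₀ ∧ 1 ≤ d₁ ∧ 1 ≤ d₂ ∧
        ∀ l : ℕ, (x₀ + l * d₁, y₀ + l * d₂) ∈ FS (A ×ˢ B) :=
  stmt_12_general A hA1
end

section
/- Let a be a positive integer and let n be the number of ones in the binary expansion of a (i.e. the number of terms in its dyadic expansion). Then for every integer m with n ≤ m ≤ a, the number a can be written as a sum of exactly m (not necessarily distinct) powers of two. -/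
lemma aux_double (l : List ℕ) :
    ((l.map (· + 1)).map (fun e => 2 ^ e)).sum = 2 * (l.map (fun e => 2 ^ e)).sum := by
  induction l with
  | nil => simp
  | cons a t ih =>
    simp only [List.map_cons, List.map_map, List.sum_cons] at *
    simp [Function.comp, pow_succ] at *
    omega

lemma aux_base (L : List ℕ) (hL : ∀ d ∈ L, d < 2) :
    ∃ l : List ℕ, l.length = L.count 1 ∧ Nat.ofDigits 2 L = (l.map (fun e => 2 ^ e)).sum := by
  induction L with
  | nil => exact ⟨[], by simp, by simp⟩
  | cons d T ih =>
    obtain ⟨l, hlen, hsum⟩ := ih (fun x hx => hL x (by simp [hx]))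
    have hd := hL d (by simp)
    interval_cases d
    · refine ⟨l.map (· + 1), by simpa using hlen, ?_⟩
      rw [aux_double, ← hsum]
      simp [Nat.ofDigits_cons]
    · refine ⟨0 :: l.map (· + 1), by simpa using hlen, ?_⟩
      simp only [List.map_cons, List.sum_cons, aux_double, ← hsum, Nat.ofDigits_cons]
      ring

/-- If `a` has `n` ones in its binary expansion, then for every `m` with `n ≤ m ≤ a`,
the number `a` can be written as a sum of exactly `m` (not necessarily distinct)
powers of two. -/
theorem stmt_13 (a : ℕ) (ha : 0 < a) (m : ℕ)
    (h1 : (Nat.digits 2 a).count 1 ≤ m) (h2 : m ≤ a) :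
    ∃ l : List ℕ, l.length = m ∧ a = (l.map (fun e => 2 ^ e)).sum := by
  induction m, h1 using Nat.le_induction with
  | base =>
    obtain ⟨l, hlen, hsum⟩ := aux_base (Nat.digits 2 a)
      (fun d hd => Nat.digits_lt_base (by norm_num) hd)
    exact ⟨l, hlen, by rw [← hsum, Nat.ofDigits_digits]⟩
  | succ m hm ih =>
    obtain ⟨l, hlen, hsum⟩ := ih (le_of_lt h2)
    have hex : ∃ e ∈ l, e ≠ 0 := by
      by_contra h
      push_neg at h
      have hs : (l.map (fun e => 2 ^ e)).sum = (l.map (fun e => 2 ^ e)).length • 1 := by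
        apply List.sum_eq_card_nsmul
        intro b hb
        obtain ⟨e, he, rfl⟩ := List.mem_map.1 hb
        simp [h e he]
      simp [hlen] at hs
      omega
    obtain ⟨e, he, hne⟩ := hex
    obtain ⟨s, t, rfl⟩ := List.append_of_mem he
    refine ⟨(e - 1) :: (e - 1) :: (s ++ t), by simp at hlen ⊢; omega, ?_⟩
    have hp : 2 ^ (e - 1) + 2 ^ (e - 1) = 2 ^ e := by
      obtain ⟨k, rfl⟩ := Nat.exists_eq_succ_of_ne_zero hne
      simp [pow_succ]; ring
    simp only [List.map_cons, List.map_append, List.sum_cons, List.sum_append] at hsum ⊢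
    omega
end
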